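/- Let C be a cyclic code in F_q[x]/(x^n−1) with idempotent generator e (or generator polynomial g). If d*(φ_{α,f}) = ω(f) for f ∈ {e, g} and some primitive n-th root of unity α, then d(C) = Δ(C) and α is an optimal root of C. -/

import Mathlib

open Polynomial

noncomputable def dftP {L : Type*} [Field L] (n : ℕ) (α : L) (f : L[X]) : L[X] :=
  ∑ j ∈ Finset.range n, C (f.eval (α ^ j)) * X ^ j

noncomputable def idftP {L : Type*} [Field L] (n : ℕ) (α : L) (g : L[X]) : L[X] :=
  C ((n : L)⁻¹) * ∑ i ∈ Finset.range n, C (g.eval (α⁻¹ ^ i)) * X ^ i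

open Classical in
noncomputable def appDist {L : Type*} [Field L] (n : ℕ) (g : L[X]) : ℕ :=
  if g = 0 then 0
  else (Finset.range n).sup fun h => n - ((X ^ h * g) %ₘ (X ^ n - 1)).natDegree

structure CyclicCode (L : Type*) [Field L] (q n : ℕ) where
  carrier : Set (Polynomial L)
  zero_mem : 0 ∈ carrier
  deg_lt : ∀ f ∈ carrier, Polynomial.natDegree f < n
  coeff_mem : ∀ f ∈ carrier, ∀ i, (Polynomial.coeff f i) ^ q = Polynomial.coeff f i
  add_mem : ∀ f ∈ carrier, ∀ g ∈ carrier, f + g ∈ carrier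
  smul_mem : ∀ a : L, a ^ q = a → ∀ f ∈ carrier, Polynomial.C a * f ∈ carrier
  shift_mem : ∀ f ∈ carrier, (Polynomial.X * f) %ₘ (Polynomial.X ^ n - 1) ∈ carrier

noncomputable def minDist {L : Type*} [Field L] {q n : ℕ} (C : CyclicCode L q n) : ℕ :=
  sInf { w | ∃ c ∈ C.carrier, c ≠ 0 ∧ w = c.support.card }

open Classical in
noncomputable def appDistAt {L : Type*} [Field L] {q n : ℕ} (α : L) (C : CyclicCode L q n) : ℕ :=
  sInf { d | ∃ c ∈ C.carrier, c ≠ 0 ∧ d = appDist n (dftP n α c) }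

open Classical in
noncomputable def appDistCode {L : Type*} [Field L] {q n : ℕ} (C : CyclicCode L q n) : ℕ :=
  sSup { d | ∃ α : L, IsPrimitiveRoot α n ∧ d = appDistAt α C }

def IsOptimalRoot {L : Type*} [Field L] {q n : ℕ} (α : L) (C : CyclicCode L q n) : Prop :=
  IsPrimitiveRoot α n ∧ appDistAt α C = appDistCode C

def IsGenBy {L : Type*} [Field L] {q n : ℕ} (v : Polynomial L) (C : CyclicCode L q n) : Prop :=
  v ∈ C.carrier ∧ ∀ C' : CyclicCode L q n, v ∈ C'.carrier → C.carrier ⊆ C'.carrier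

def IsIdemGen {L : Type*} [Field L] {q n : ℕ} (e : Polynomial L) (C : CyclicCode L q n) : Prop :=
  e ∈ C.carrier ∧ (e * e) %ₘ (X ^ n - 1) = e ∧ ∀ c ∈ C.carrier, (e * c) %ₘ (X ^ n - 1) = c

def IsGenPoly {L : Type*} [Field L] {q n : ℕ} (g : Polynomial L) (C : CyclicCode L q n) : Prop :=
  g ∈ C.carrier ∧ g.Monic ∧ g ∣ (X ^ n - 1) ∧ (∀ c ∈ C.carrier, g ∣ c) ∧
    ∀ f : L[X], f.natDegree < n → (∀ i, f.coeff i ^ q = f.coeff i) → g ∣ f → f ∈ C.carrier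

noncomputable def polyGcd {L : Type*} [Field L] (a b : L[X]) : L[X] :=
  letI := Classical.decEq L[X]
  EuclideanDomain.gcd a b


/-! The BCH bound gives `d*_β(C) ≤ d(C)` for every primitive root `β`: if some cyclic shift of
`φ_{β,c}` has degree `D` with `n - D > ω(c)`, then `c` vanishes at `ω(c)` consecutive powers of
`β`, which a Vandermonde determinant forbids. Conversely every codeword vanishes wherever `f`
does (`c = e c mod xⁿ - 1`, resp. `g ∣ c`), so the support of `φ_{α,c}` lies in that of
`φ_{α,f}`; the apparent distance is antitone in the support, whence
`d*_α(C) = d*(φ_{α,f}) = ω(f) ≥ d(C)`. Together, `d(C) = d*_α(C) = max_β d*_β(C)`. -/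

open Finset

theorem Nat.add_sub_mod_add_mod {n i : ℕ} (h : ℕ) (hi : i < n) :
    ((i + (n - h % n)) % n + h) % n = i := by
  have hmod := Nat.mod_lt h ((Nat.zero_le _).trans_lt hi)
  have hdiv := Nat.div_add_mod h n
  rw [Nat.mod_add_mod, show i + (n - h % n) + h = i + n * (h / n + 1) by rw [Nat.mul_add]; omega,
    Nat.add_mul_mod_self_left, Nat.mod_eq_of_lt hi]

namespace Polynomial

theorem natDegree_le_natDegree_of_support_subset {R : Type*} [Semiring R] {p q : R[X]}
    (h : p.support ⊆ q.support) : p.natDegree ≤ q.natDegree := by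
  rcases eq_or_ne p 0 with rfl | hp
  · simp
  · exact le_natDegree_of_mem_supp _ (h (natDegree_mem_support_of_nonzero hp))

section XPowSubOne

variable {R : Type*} [CommRing R] {n : ℕ}

theorem monic_X_pow_sub_one (hn : n ≠ 0) : (X ^ n - 1 : R[X]).Monic := by
  simpa using monic_X_pow_sub_C (1 : R) hn

theorem natDegree_modByMonic_X_pow_sub_one_lt [Nontrivial R] (hn : n ≠ 0) (p : R[X]) :
    (p %ₘ (X ^ n - 1)).natDegree < n := by
  have hdeg : (X ^ n - 1 : R[X]).natDegree = n := by
    simpa using natDegree_X_pow_sub_C (n := n) (r := (1 : R))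
  simpa [hdeg] using natDegree_modByMonic_lt p (monic_X_pow_sub_one hn)
    fun h => not_isUnit_X_pow_sub_one R n (by rw [h]; exact isUnit_one)

theorem eval_modByMonic_X_pow_sub_one (p : R[X]) {β : R} (hβ : β ^ n = 1) :
    (p %ₘ (X ^ n - 1)).eval β = p.eval β :=
  eval₂_modByMonic_eq_self_of_root (by simp [hβ])

theorem X_pow_mul_modByMonic_X_pow_sub_one [Nontrivial R] (h : ℕ) {p : R[X]}
    (hp : p.natDegree < n) :
    (X ^ h * p) %ₘ (X ^ n - 1) = ∑ j ∈ range n, C (p.coeff j) * X ^ ((j + h) % n) := by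
  have hn : 0 < n := (Nat.zero_le _).trans_lt hp
  have hmonic : (X ^ n - 1 : R[X]).Monic := monic_X_pow_sub_one hn.ne'
  have hdeg : (X ^ n - 1 : R[X]).degree = n := by simpa using degree_X_pow_sub_C hn (1 : R)
  rw [modByMonic_eq_of_dvd_sub hmonic
    (p₂ := ∑ j ∈ range n, C (p.coeff j) * X ^ ((j + h) % n)), (modByMonic_eq_self_iff hmonic).2]
  · rw [hdeg]
    refine (degree_sum_le _ _).trans_lt
      ((Finset.sup_lt_iff (WithBot.bot_lt_coe n)).2 fun j _ => ?_)
    exact (degree_C_mul_X_pow_le _ _).trans_lt (WithBot.coe_lt_coe.2 (Nat.mod_lt _ hn))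
  · conv => enter [2, 1]; rw [as_sum_range' p n hp, mul_sum]
    rw [← sum_sub_distrib]
    refine dvd_sum fun j _ => ?_
    have hsplit : (X : R[X]) ^ (j + h) = (X ^ n) ^ ((j + h) / n) * X ^ ((j + h) % n) := by
      rw [← pow_mul, ← pow_add, Nat.div_add_mod]
    rw [← C_mul_X_pow_eq_monomial, X_pow_mul, mul_assoc, ← mul_sub, ← pow_add, hsplit]
    refine Dvd.dvd.mul_left ?_ _
    simpa [sub_mul] using (sub_one_dvd_pow_sub_one (X ^ n : R[X]) ((j + h) / n)).mul_right
      (X ^ ((j + h) % n))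

theorem coeff_X_pow_mul_modByMonic_X_pow_sub_one [Nontrivial R] (h : ℕ) {p : R[X]}
    (hp : p.natDegree < n) {i : ℕ} (hi : i < n) :
    ((X ^ h * p) %ₘ (X ^ n - 1)).coeff i = p.coeff ((i + (n - h % n)) % n) := by
  have hn : 0 < n := (Nat.zero_le _).trans_lt hp
  have hj : (i + (n - h % n)) % n < n := Nat.mod_lt _ hn
  have hji := Nat.add_sub_mod_add_mod h hi
  generalize (i + (n - h % n)) % n = j at hj hji ⊢
  subst hji
  rw [X_pow_mul_modByMonic_X_pow_sub_one h hp, finsetSum_coeff,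
    sum_eq_single_of_mem j (mem_range.2 hj) fun k hk hkj => ?_]
  · simp
  · have hne : (k + h) % n ≠ (j + h) % n := fun hkj' => hkj <| by
      simpa [Nat.ModEq, Nat.mod_eq_of_lt (mem_range.1 hk), Nat.mod_eq_of_lt hj]
        using Nat.ModEq.add_right_cancel' h hkj'
    simp [coeff_X_pow, hne.symm]

end XPowSubOne

end Polynomial

theorem IsPrimitiveRoot.eq_zero_of_eval_pow_add_eq_zero {R : Type*} [CommRing R] [IsDomain R]
    {n : ℕ} {α : R} (hα : IsPrimitiveRoot α n) {c : R[X]} (hdeg : c.natDegree < n) (m : ℕ)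
    (hz : ∀ r < #c.support, c.eval (α ^ (m + r)) = 0) : c = 0 := by
  have hn : n ≠ 0 := ((Nat.zero_le _).trans_lt hdeg).ne'
  set S := c.support
  let ι : Fin #S → ℕ := fun k => S.equivFin.symm k
  have hιS (k) : ι k ∈ S := (S.equivFin.symm k).2
  have hιn (k) : ι k < n := (le_natDegree_of_mem_supp _ (hιS k)).trans_lt hdeg
  have hnodes : Function.Injective fun k => α ^ ι k := fun a b hab =>
    S.equivFin.symm.injective (Subtype.ext (hα.pow_inj (hιn a) (hιn b) hab))
  have hv := Matrix.eq_zero_of_forall_pow_sum_mul_pow_eq_zero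
    (v := fun k => c.coeff (ι k) * α ^ (m * ι k)) hnodes fun r => ?_
  · by_contra hc
    obtain ⟨k⟩ : Nonempty (Fin #S) := ⟨⟨0, card_pos.2 (support_nonempty.2 hc)⟩⟩
    have hk := congrFun hv k
    simp only [Pi.zero_apply, mul_eq_zero, pow_eq_zero_iff'] at hk
    rcases hk with hk | ⟨hk, -⟩
    exacts [mem_support_iff.1 (hιS k) hk, hα.ne_zero hn hk]
  · calc ∑ k, c.coeff (ι k) * α ^ (m * ι k) * (α ^ ι k) ^ (r : ℕ)
        = ∑ k, c.coeff (ι k) * (α ^ (m + r)) ^ ι k := by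
          refine sum_congr rfl fun k _ => ?_
          ring
      _ = ∑ i ∈ S, c.coeff i * (α ^ (m + r)) ^ i := by
          rw [← sum_coe_sort S]
          exact Equiv.sum_comp S.equivFin.symm fun i : S => c.coeff i * (α ^ (m + r)) ^ (i : ℕ)
      _ = c.eval (α ^ (m + r)) := by rw [eval_eq_sum, sum_def]
      _ = 0 := hz r r.2

section DiscreteFourierTransform

variable {L : Type*} [Field L] {n : ℕ}

theorem coeff_dftP (n : ℕ) (α : L) (f : L[X]) (j : ℕ) :
    (dftP n α f).coeff j = if j < n then f.eval (α ^ j) else 0 := by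
  simp [dftP, finsetSum_coeff, coeff_X_pow]

theorem natDegree_dftP_lt (hn : 0 < n) (α : L) (f : L[X]) : (dftP n α f).natDegree < n := by
  rcases eq_or_ne (dftP n α f) 0 with h | h
  · simpa [h]
  · have := coeff_dftP n α f (dftP n α f).natDegree
    by_contra hge
    simp [hge, h] at this

theorem dftP_ne_zero {α : L} (hα : IsPrimitiveRoot α n) {c : L[X]} (hc : c ≠ 0)
    (hdeg : c.natDegree < n) : dftP n α c ≠ 0 := by
  refine fun h => hc <| eq_zero_of_natDegree_lt_card_of_eval_eq_zero c
    (f := fun i : Fin n => α ^ (i : ℕ)) (fun i j hij => Fin.ext (hα.pow_inj i.2 j.2 hij))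
    (fun i => ?_) (by simpa using hdeg)
  simpa [coeff_dftP, i.2] using congrArg (coeff · i) h

theorem support_dftP_subset {α : L} {c f : L[X]}
    (h : ∀ i < n, f.eval (α ^ i) = 0 → c.eval (α ^ i) = 0) :
    (dftP n α c).support ⊆ (dftP n α f).support := by
  intro i
  simp only [mem_support_iff, coeff_dftP]
  split_ifs with hi
  exacts [mt (h i hi), id]

end DiscreteFourierTransform

section ApparentDistance

variable {L : Type*} [Field L] {n : ℕ}

theorem appDist_le_appDist_of_support_subset {A B : L[X]} (hA : A.natDegree < n)
    (hBA : B.support ⊆ A.support) (hB0 : B ≠ 0) : appDist n A ≤ appDist n B := by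
  have hA0 : A ≠ 0 := fun h => hB0 (by simpa [h] using hBA)
  have hBn : B.natDegree < n := (natDegree_le_natDegree_of_support_subset hBA).trans_lt hA
  have hn : n ≠ 0 := ((Nat.zero_le _).trans_lt hA).ne'
  rw [appDist, appDist, if_neg hA0, if_neg hB0]
  refine Finset.sup_mono_fun fun h _ => Nat.sub_le_sub_left ?_ n
  refine natDegree_le_natDegree_of_support_subset fun i hi => ?_
  have hin : i < n :=
    (le_natDegree_of_mem_supp i hi).trans_lt (natDegree_modByMonic_X_pow_sub_one_lt hn _)
  rw [mem_support_iff, coeff_X_pow_mul_modByMonic_X_pow_sub_one h hBn hin] at hi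
  rw [mem_support_iff, coeff_X_pow_mul_modByMonic_X_pow_sub_one h hA hin]
  exact mem_support_iff.1 (hBA (mem_support_iff.2 hi))

theorem appDist_dftP_le_card_support {α : L} (hα : IsPrimitiveRoot α n) {c : L[X]}
    (hdeg : c.natDegree < n) : appDist n (dftP n α c) ≤ #c.support := by
  have hn : 0 < n := (Nat.zero_le _).trans_lt hdeg
  rcases eq_or_ne c 0 with rfl | hc
  · simp [appDist, dftP]
  rw [appDist, if_neg (dftP_ne_zero hα hc hdeg)]
  refine Finset.sup_le fun h _ => ?_
  set D := ((X ^ h * dftP n α c) %ₘ (X ^ n - 1)).natDegree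
  by_contra! hlt
  -- the coefficients `D + 1, …, D + #c.support` of the `h`-th cyclic shift of `dftP n α c`
  -- vanish, and they are the values of `c` at consecutive powers of `α`
  refine hc (hα.eq_zero_of_eval_pow_add_eq_zero hdeg (D + 1 + (n - h % n)) fun r hr => ?_)
  have hi : D + 1 + r < n := by omega
  have hcoeff := coeff_X_pow_mul_modByMonic_X_pow_sub_one h (natDegree_dftP_lt hn α c) hi
  have hpow (k : ℕ) : α ^ (k % n) = α ^ k := by rw [hα.eq_orderOf, pow_mod_orderOf]
  rw [coeff_eq_zero_of_natDegree_lt (by omega), coeff_dftP, if_pos (Nat.mod_lt _ hn), hpow]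
    at hcoeff
  rw [hcoeff, add_right_comm]

end ApparentDistance
namespace CyclicCode

variable {L : Type*} [Field L] {q n : ℕ} (Cc : CyclicCode L q n)

theorem minDist_le_card_support {c : L[X]} (hc : c ∈ Cc.carrier) (hc0 : c ≠ 0) :
    minDist Cc ≤ #c.support :=
  Nat.sInf_le ⟨c, hc, hc0, rfl⟩

theorem appDistAt_le_minDist {α : L} (hα : IsPrimitiveRoot α n) :
    appDistAt α Cc ≤ minDist Cc := by
  by_cases h : ∃ c ∈ Cc.carrier, c ≠ 0
  · obtain ⟨c₀, hc₀, hc₀0⟩ := h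
    obtain ⟨c, hc, hc0, hmin⟩ :
        minDist Cc ∈ {w | ∃ c ∈ Cc.carrier, c ≠ 0 ∧ w = #c.support} :=
      Nat.sInf_mem ⟨_, c₀, hc₀, hc₀0, rfl⟩
    calc appDistAt α Cc ≤ appDist n (dftP n α c) := Nat.sInf_le ⟨c, hc, hc0, rfl⟩
      _ ≤ #c.support := appDist_dftP_le_card_support hα (Cc.deg_lt c hc)
      _ = minDist Cc := hmin.symm
  · have hempty : {d | ∃ c ∈ Cc.carrier, c ≠ 0 ∧ d = appDist n (dftP n α c)} = ∅ :=
      Set.eq_empty_of_forall_notMem fun _ ⟨c, hc, hc0, _⟩ => h ⟨c, hc, hc0⟩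
    rw [appDistAt, hempty, Nat.sInf_empty]
    exact Nat.zero_le _

theorem appDist_dftP_le_appDistAt {α : L} (hα : IsPrimitiveRoot α n) {f : L[X]}
    (hfC : f ∈ Cc.carrier) (hf0 : f ≠ 0)
    (hz : ∀ c ∈ Cc.carrier, ∀ i < n, f.eval (α ^ i) = 0 → c.eval (α ^ i) = 0) :
    appDist n (dftP n α f) ≤ appDistAt α Cc := by
  have hn : 0 < n := (Nat.zero_le _).trans_lt (Cc.deg_lt f hfC)
  refine le_csInf ⟨_, f, hfC, hf0, rfl⟩ fun d ⟨c, hc, hc0, hd⟩ => hd ▸ ?_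
  exact appDist_le_appDist_of_support_subset (natDegree_dftP_lt hn α f)
    (support_dftP_subset (hz c hc)) (dftP_ne_zero hα hc0 (Cc.deg_lt c hc))

theorem appDistCode_eq_minDist {α : L} (hα : IsPrimitiveRoot α n)
    (h : appDistAt α Cc = minDist Cc) : appDistCode Cc = minDist Cc :=
  IsGreatest.csSup_eq
    ⟨⟨α, hα, h.symm⟩, fun _ ⟨_, hβ, hd⟩ => hd ▸ Cc.appDistAt_le_minDist hβ⟩

theorem minDist_eq_appDistCode_of_appDist_dftP_eq_card {α : L} (hα : IsPrimitiveRoot α n)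
    {f : L[X]} (hfC : f ∈ Cc.carrier) (hf0 : f ≠ 0)
    (hz : ∀ c ∈ Cc.carrier, ∀ i < n, f.eval (α ^ i) = 0 → c.eval (α ^ i) = 0)
    (hd : appDist n (dftP n α f) = #f.support) :
    minDist Cc = appDistCode Cc ∧ IsOptimalRoot α Cc := by
  have hopt : appDistAt α Cc = minDist Cc := le_antisymm (Cc.appDistAt_le_minDist hα) <|
    calc minDist Cc ≤ #f.support := Cc.minDist_le_card_support hfC hf0
      _ = appDist n (dftP n α f) := hd.symm
      _ ≤ appDistAt α Cc := Cc.appDist_dftP_le_appDistAt hα hfC hf0 hz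
  have hcode := Cc.appDistCode_eq_minDist hα hopt
  exact ⟨hcode.symm, hα, hopt.trans hcode.symm⟩

end CyclicCode

section Generators

variable {L : Type*} [Field L] {q n : ℕ} {Cc : CyclicCode L q n} {c : L[X]}

theorem IsIdemGen.ne_zero {e : L[X]} (he : IsIdemGen e Cc) (hc : c ∈ Cc.carrier) (hc0 : c ≠ 0) :
    e ≠ 0 := by
  rintro rfl
  exact hc0 (by simpa using (he.2.2 c hc).symm)

theorem IsIdemGen.eval_eq_zero {e : L[X]} (he : IsIdemGen e Cc) (hc : c ∈ Cc.carrier) {β : L}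
    (hβ : β ^ n = 1) (heβ : e.eval β = 0) : c.eval β = 0 := by
  rw [← he.2.2 c hc, eval_modByMonic_X_pow_sub_one _ hβ, eval_mul, heβ, zero_mul]

theorem IsGenPoly.eval_eq_zero {g : L[X]} (hg : IsGenPoly g Cc) (hc : c ∈ Cc.carrier) {β : L}
    (hgβ : g.eval β = 0) : c.eval β = 0 := by
  obtain ⟨u, rfl⟩ := hg.2.2.2.1 c hc
  rw [eval_mul, hgβ, zero_mul]

end Generators

theorem stmt13_general {L : Type*} [Field L] (q n : ℕ)
    (Cc : CyclicCode L q n) (e g : L[X])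
    (he : IsIdemGen e Cc) (hg : IsGenPoly g Cc)
    (f : L[X]) (hf : f = e ∨ f = g)
    (α : L) (hα : IsPrimitiveRoot α n)
    (hd : appDist n (dftP n α f) = f.support.card) :
    minDist Cc = appDistCode Cc ∧ IsOptimalRoot α Cc := by
  have hroot (i : ℕ) : (α ^ i) ^ n = 1 := by rw [pow_right_comm, hα.pow_eq_one, one_pow]
  obtain ⟨hfC, hf0, hz⟩ : f ∈ Cc.carrier ∧ f ≠ 0 ∧
      ∀ c ∈ Cc.carrier, ∀ i < n, f.eval (α ^ i) = 0 → c.eval (α ^ i) = 0 := by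
    rcases hf with rfl | rfl
    · exact ⟨he.1, he.ne_zero hg.1 hg.2.1.ne_zero,
        fun c hc i _ => he.eval_eq_zero hc (hroot i)⟩
    · exact ⟨hg.1, hg.2.1.ne_zero, fun c hc _ _ => hg.eval_eq_zero hc⟩
  exact Cc.minDist_eq_appDistCode_of_appDist_dftP_eq_card hα hfC hf0 hz hd

/-- if d*(φ_{α,f}) = ω(f) for f the idempotent generator or the generator
polynomial of C, then d(C) = Δ(C) (= d*(C) by Camion) and α is an optimal root of C. -/
theorem stmt13 {L : Type*} [Field L] (p q s n : ℕ) (hp : p.Prime) [CharP L p]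
    (hq : q = p ^ s) (hs : 0 < s) (hn : 0 < n) (hcop : Nat.Coprime n q)
    (Cc : CyclicCode L q n) (e g : L[X])
    (he : IsIdemGen e Cc) (hg : IsGenPoly g Cc)
    (f : L[X]) (hf : f = e ∨ f = g)
    (α : L) (hα : IsPrimitiveRoot α n)
    (hd : appDist n (dftP n α f) = f.support.card) :
    minDist Cc = appDistCode Cc ∧ IsOptimalRoot α Cc :=
  stmt13_general q n Cc e g he hg f hf α hα hd
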